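/- Let S_m = (Z₁,…,Z_m) be i.i.d. discrete random variables and let (H,K) be a random variable on a finite space that is a (possibly randomized) function of S_m. Then the mutual information satisfies I(Z_trn; (H,K)) ≤ I(S_m; (H,K))/m, where Z_trn is obtained by picking an index uniformly at random from {1,…,m} (independently of everything else) and outputting Z at that index. -/

import Mathlib

open scoped Classical BigOperators

/-- `μ` is a probability mass function on a finite type. -/
def IsPMF {Ω : Type*} [Fintype Ω] (μ : Ω → ℝ) : Prop :=
  (∀ ω, 0 ≤ μ ω) ∧ ∑ ω, μ ω = 1

/-- Probability that the random variable `X` takes the value `a` under `μ`. -/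
noncomputable def pr {Ω α : Type*} [Fintype Ω] (μ : Ω → ℝ) (X : Ω → α) (a : α) : ℝ :=
  ∑ ω, if X ω = a then μ ω else 0

/-- Variational information `J(X;Y)`: total variation distance between the joint
law of `(X,Y)` and the product of the marginal laws. -/
noncomputable def vinfo {Ω α β : Type*} [Fintype Ω] [Fintype α] [Fintype β]
    (μ : Ω → ℝ) (X : Ω → α) (Y : Ω → β) : ℝ :=
  (1/2) * ∑ a, ∑ b, |pr μ (fun ω => (X ω, Y ω)) (a, b) - pr μ X a * pr μ Y b|

/-- Conditional variational information `J(X;Y|W)`: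
`E_W[d_TV(P(X,Y|W), P(X|W)⊗P(Y|W))]`. -/
noncomputable def condVinfo {Ω α β γ : Type*} [Fintype Ω] [Fintype α] [Fintype β] [Fintype γ]
    (μ : Ω → ℝ) (X : Ω → α) (Y : Ω → β) (W : Ω → γ) : ℝ :=
  (1/2) * ∑ c, ∑ a, ∑ b,
    |pr μ (fun ω => (X ω, Y ω, W ω)) (a, b, c) -
      pr μ (fun ω => (X ω, W ω)) (a, c) * pr μ (fun ω => (Y ω, W ω)) (b, c) / pr μ W c|

/-- Shannon mutual information (in nats) between discrete random variables. -/
noncomputable def MI {Ω α β : Type*} [Fintype Ω] [Fintype α] [Fintype β]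
    (μ : Ω → ℝ) (X : Ω → α) (Y : Ω → β) : ℝ :=
  ∑ a, ∑ b, pr μ (fun ω => (X ω, Y ω)) (a, b) *
    Real.log (pr μ (fun ω => (X ω, Y ω)) (a, b) / (pr μ X a * pr μ Y b))

/-!
Write `P(z, y)` for the joint law of the sample `Z = (Zᵢ)ᵢ` and `Y = (H, K)`, and `Pᵢ(a, y)`
for that of `(Zᵢ, Y)`. Since the `Zᵢ` are independent, `P_Z(z) = ∏ᵢ P_{Zᵢ}(zᵢ)`, and the
pointwise mutual informations split as
`log (P / (P_Z P_Y)) = ∑ᵢ log (Pᵢ / (P_{Zᵢ} P_Y)) + log (P / Q)`,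
where `Q(z, y) = P_Y(y) ∏ᵢ P(Zᵢ = zᵢ | Y = y)` is the law under which the `Zᵢ` become
conditionally independent given `Y`. Taking expectations, `I(Z; Y) = ∑ᵢ I(Zᵢ; Y) + D(P ‖ Q)`,
and `D(P ‖ Q) ≥ 0` by Gibbs' inequality since `Q` has total mass one and `P ≪ Q`.
-/

open Real Finset

theorem sum_mul_log_div_nonneg {ι : Type*} [Fintype ι] {p q : ι → ℝ} (hp : ∀ x, 0 ≤ p x)
    (hq : ∀ x, 0 ≤ q x) (hsum : ∑ x, q x ≤ ∑ x, p x) (hpq : ∀ x, 0 < p x → 0 < q x) :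
    0 ≤ ∑ x, p x * log (p x / q x) := by
  have hterm : ∀ x, p x - q x ≤ p x * log (p x / q x) := by
    intro x
    rcases (hp x).eq_or_lt with h | h
    · simp [← h, hq x]
    · have hqx := hpq x h
      calc p x - q x = p x * (1 - (p x / q x)⁻¹) := by field_simp
        _ ≤ p x * log (p x / q x) :=
          mul_le_mul_of_nonneg_left (one_sub_inv_le_log_of_pos (div_pos h hqx)) h.le
  calc 0 ≤ ∑ x, (p x - q x) := by rw [sum_sub_distrib]; linarith
    _ ≤ ∑ x, p x * log (p x / q x) := sum_le_sum fun x _ => hterm x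

theorem log_div_prod_mul_eq {ι : Type*} [Fintype ι] {p s : ℝ} {a c : ι → ℝ} (hp : p ≠ 0)
    (hs : s ≠ 0) (ha : ∀ i, a i ≠ 0) (hc : ∀ i, c i ≠ 0) :
    log (p / ((∏ i, c i) * s)) = ∑ i, log (a i / (c i * s)) + log (p / (s * ∏ i, a i / s)) := by
  have hprod : ∀ i ∈ univ, a i / (c i * s) ≠ 0 :=
    fun i _ => div_ne_zero (ha i) (mul_ne_zero (hc i) hs)
  have hprod_ne : ∏ i, a i ≠ 0 := prod_ne_zero_iff.mpr fun i _ => ha i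
  have hprodc_ne : ∏ i, c i ≠ 0 := prod_ne_zero_iff.mpr fun i _ => hc i
  have hsplit : p / ((∏ i, c i) * s) = (∏ i, a i / (c i * s)) * (p / (s * ∏ i, a i / s)) := by
    simp only [prod_div_distrib, prod_mul_distrib, prod_const]
    field_simp
  rw [hsplit, log_mul (prod_ne_zero_iff.mpr hprod), log_prod hprod]
  exact div_ne_zero hp (mul_ne_zero hs (prod_ne_zero_iff.mpr fun i _ => div_ne_zero (ha i) hs))

section pr

variable {Ω α β : Type*} [Fintype Ω] {μ : Ω → ℝ}

theorem pr_nonneg (hμ : ∀ ω, 0 ≤ μ ω) (X : Ω → α) (a : α) : 0 ≤ pr μ X a :=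
  sum_nonneg fun ω _ => by split_ifs <;> simp [hμ ω]

theorem pr_apply_pos (hμ : ∀ ω, 0 ≤ μ ω) (X : Ω → α) {ω : Ω} (hω : 0 < μ ω) :
    0 < pr μ X (X ω) :=
  hω.trans_le <| by
    simpa [pr] using single_le_sum (f := fun ω' => if X ω' = X ω then μ ω' else 0)
      (fun ω' _ => by split_ifs <;> simp [hμ ω']) (mem_univ ω)

theorem pr_le_pr_comp (hμ : ∀ ω, 0 ≤ μ ω) (X : Ω → α) (f : α → β) (a : α) :
    pr μ X a ≤ pr μ (fun ω => f (X ω)) (f a) :=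
  sum_le_sum fun ω _ => by
    by_cases h : X ω = a
    · simp [h]
    · rw [if_neg h]; split_ifs <;> simp [hμ ω]

variable [Fintype α]

theorem sum_pr_mul (μ : Ω → ℝ) (X : Ω → α) (g : α → ℝ) :
    ∑ a, pr μ X a * g a = ∑ ω, μ ω * g (X ω) := by
  simp only [pr, sum_mul, ite_mul, zero_mul]
  rw [sum_comm]
  simp

theorem sum_pr (μ : Ω → ℝ) (X : Ω → α) : ∑ a, pr μ X a = ∑ ω, μ ω := by
  simpa using sum_pr_mul μ X 1

theorem pr_comp (μ : Ω → ℝ) (X : Ω → α) (f : α → β) (b : β) :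
    pr μ (fun ω => f (X ω)) b = ∑ a, pr μ X a * if f a = b then 1 else 0 := by
  rw [sum_pr_mul]
  simp [pr]

theorem sum_pr_prod_left (μ : Ω → ℝ) (X : Ω → α) (Y : Ω → β) (b : β) :
    ∑ a, pr μ (fun ω => (X ω, Y ω)) (a, b) = pr μ Y b := by
  unfold pr
  rw [sum_comm]
  refine sum_congr rfl fun ω _ => ?_
  by_cases h : Y ω = b <;> simp [Prod.ext_iff, h]

theorem MI_eq_sum_mul_log [Fintype β] (μ : Ω → ℝ) (X : Ω → α) (Y : Ω → β) :
    MI μ X Y = ∑ ω, μ ω *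
      log (pr μ (fun ω => (X ω, Y ω)) (X ω, Y ω) / (pr μ X (X ω) * pr μ Y (Y ω))) := by
  rw [MI, ← Fintype.sum_prod_type']
  exact sum_pr_mul μ (fun ω => (X ω, Y ω))
    fun x => log (pr μ (fun ω => (X ω, Y ω)) x / (pr μ X x.1 * pr μ Y x.2))

theorem pr_coord_eq_of_pr_eq_prod {ι : Type*} [Fintype ι] {Z : Ω → ι → α} {q : ι → α → ℝ}
    (hq : ∀ i, ∑ a, q i a = 1) (hZ : ∀ z, pr μ Z z = ∏ i, q i (z i)) (i : ι) (a : α) :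
    pr μ (fun ω => Z ω i) a = q i a := by
  -- `r` moves the indicator of `zᵢ = a` into the `i`-th factor: the marginal is a product of sums.
  let r : ι → α → ℝ := fun j b => if j = i then q j b * if b = a then 1 else 0 else q j b
  have hr : ∀ z : ι → α, (∏ j, q j (z j)) * (if z i = a then 1 else 0) = ∏ j, r j (z j) := by
    intro z
    by_cases h : z i = a
    · simp only [h, if_true, mul_one]
      exact prod_congr rfl fun j _ => by by_cases hj : j = i <;> simp [r, hj, h]
    · rw [if_neg h, mul_zero, eq_comm]
      exact prod_eq_zero (mem_univ i) (by simp [r, h])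
  have hr_sum : ∀ j, ∑ b, r j b = if j = i then q i a else 1 := by
    intro j
    by_cases h : j = i
    · subst h; simp [r]
    · simp [r, h, hq j]
  rw [pr_comp μ Z fun z => z i]
  simp only [hZ, hr, ← Fintype.prod_sum, hr_sum]
  simp

end pr

section condIndepLaw

variable {Ω ι α β : Type*} [Fintype Ω] [Fintype ι] {μ : Ω → ℝ}

noncomputable def condIndepLaw (μ : Ω → ℝ) (Z : Ω → ι → α) (Y : Ω → β) (x : (ι → α) × β) : ℝ :=
  pr μ Y x.2 * ∏ i, pr μ (fun ω => (Z ω i, Y ω)) (x.1 i, x.2) / pr μ Y x.2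

theorem condIndepLaw_nonneg (hμ : ∀ ω, 0 ≤ μ ω) (Z : Ω → ι → α) (Y : Ω → β) (x : (ι → α) × β) :
    0 ≤ condIndepLaw μ Z Y x :=
  mul_nonneg (pr_nonneg hμ Y _)
    (prod_nonneg fun _ _ => div_nonneg (pr_nonneg hμ _ _) (pr_nonneg hμ Y _))

theorem condIndepLaw_pos (hμ : ∀ ω, 0 ≤ μ ω) {Z : Ω → ι → α} {Y : Ω → β} {x : (ι → α) × β}
    (hx : 0 < pr μ (fun ω => (Z ω, Y ω)) x) : 0 < condIndepLaw μ Z Y x := by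
  have hY : 0 < pr μ Y x.2 := hx.trans_le (pr_le_pr_comp hμ _ Prod.snd x)
  refine mul_pos hY (prod_pos fun i _ => div_pos ?_ hY)
  exact hx.trans_le (pr_le_pr_comp hμ _ (fun z => (z.1 i, z.2)) x)

theorem sum_condIndepLaw [DecidableEq ι] [Fintype α] [Fintype β] (μ : Ω → ℝ) (Z : Ω → ι → α)
    (Y : Ω → β) :
    ∑ x, condIndepLaw μ Z Y x = ∑ ω, μ ω := by
  have hfiber : ∀ y, ∑ z, condIndepLaw μ Z Y (z, y) = pr μ Y y := by
    intro y
    simp only [condIndepLaw]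
    rw [← mul_sum,
      ← Fintype.prod_sum fun i a => pr μ (fun ω => (Z ω i, Y ω)) (a, y) / pr μ Y y]
    simp only [← sum_div, sum_pr_prod_left]
    by_cases h : pr μ Y y = 0 <;> simp [h]
  rw [Fintype.sum_prod_type_right, sum_congr rfl fun y _ => hfiber y, sum_pr]

end condIndepLaw

theorem sum_MI_coord_le_MI_of_indep {Ω ι α β : Type*} [Fintype Ω] [Fintype ι] [DecidableEq ι]
    [Fintype α] [Fintype β] {μ : Ω → ℝ} (hμ : ∀ ω, 0 ≤ μ ω) (Z : Ω → ι → α) (Y : Ω → β)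
    (hZ : ∀ z, pr μ Z z = ∏ i, pr μ (fun ω => Z ω i) (z i)) :
    ∑ i, MI μ (fun ω => Z ω i) Y ≤ MI μ Z Y := by
  set P := pr μ (fun ω => (Z ω, Y ω))
  set Q := condIndepLaw μ Z Y
  have hdecomp : MI μ Z Y = ∑ i, MI μ (fun ω => Z ω i) Y +
      ∑ ω, μ ω * log (P (Z ω, Y ω) / Q (Z ω, Y ω)) := by
    simp only [MI_eq_sum_mul_log]
    rw [sum_comm, ← sum_add_distrib]
    refine sum_congr rfl fun ω _ => ?_
    rw [← mul_sum, ← mul_add]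
    rcases (hμ ω).eq_or_lt with h | h
    · simp [← h]
    rw [hZ]
    exact congrArg _ <| log_div_prod_mul_eq (pr_apply_pos hμ _ h).ne' (pr_apply_pos hμ Y h).ne'
      (fun i => (pr_apply_pos hμ _ h).ne') fun i => (pr_apply_pos hμ _ h).ne'
  have hgibbs : 0 ≤ ∑ ω, μ ω * log (P (Z ω, Y ω) / Q (Z ω, Y ω)) := by
    rw [← sum_pr_mul μ (fun ω => (Z ω, Y ω)) fun x => log (P x / Q x)]
    refine sum_mul_log_div_nonneg (pr_nonneg hμ _) (condIndepLaw_nonneg hμ Z Y) ?_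
      fun x hx => condIndepLaw_pos hμ hx
    rw [sum_condIndepLaw, sum_pr]
  linarith

theorem mutual_info_single_le_general {Ω 𝒵 𝒦 : Type*} [Fintype Ω] [Fintype 𝒵] [Fintype 𝒦]
    (m : ℕ) (μ : Ω → ℝ) (hμ : IsPMF μ)
    (Zs : Ω → Fin m → 𝒵) (q : 𝒵 → ℝ) (hq : IsPMF q)
    (hiid : ∀ z : Fin m → 𝒵, pr μ Zs z = ∏ i, q (z i))
    (HK : Ω → 𝒦) :
    (1 / (m : ℝ)) * ∑ i : Fin m, MI μ (fun ω => Zs ω i) HK ≤ MI μ Zs HK / m := by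
  have hindep : ∀ z, pr μ Zs z = ∏ i, pr μ (fun ω => Zs ω i) (z i) := fun z => by
    simp only [hiid, pr_coord_eq_of_pr_eq_prod (q := fun _ => q) (fun _ => hq.2) hiid]
  rw [one_div_mul_eq_div]
  exact div_le_div_of_nonneg_right (sum_MI_coord_le_MI_of_indep hμ.1 Zs HK hindep) m.cast_nonneg

/-- If `Z₁,…,Z_m` are i.i.d. and `(H,K)` is any random variable on the same space
(e.g. a randomized function of the sample), then
`I(Z_trn;(H,K)) = (1/m) Σ_i I(Z_i;(H,K)) ≤ I(S_m;(H,K))/m`,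
where `Z_trn` is the observation at a uniformly random index. -/
theorem mutual_info_single_le {Ω 𝒵 𝒦 : Type*} [Fintype Ω] [Fintype 𝒵] [Fintype 𝒦]
    (m : ℕ) (hm : 0 < m) (μ : Ω → ℝ) (hμ : IsPMF μ)
    (Zs : Ω → Fin m → 𝒵) (q : 𝒵 → ℝ) (hq : IsPMF q)
    (hiid : ∀ z : Fin m → 𝒵, pr μ Zs z = ∏ i, q (z i))
    (HK : Ω → 𝒦) :
    (1 / (m : ℝ)) * ∑ i : Fin m, MI μ (fun ω => Zs ω i) HK ≤ MI μ Zs HK / m :=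
  mutual_info_single_le_general m μ hμ Zs q hq hiid HK
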